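/- Let A ⟶f B ⟶g C ⟶h A⟦1⟧ be a distinguished triangle in C. Then Q(g) is an epimorphism in D if and only if h factors through an object of N. -/

import Mathlib

open CategoryTheory CategoryTheory.Limits CategoryTheory.Pretriangulated

universe v u v₂ u₂

variable {C : Type u} [Category.{v} C] [Preadditive C] [HasZeroObject C]
  [HasShift C ℤ] [∀ n : ℤ, (shiftFunctor C n).Additive] [Pretriangulated C]

/-- `f : X ⟶ Y` factors through an object of `N`. -/
def FactorsThru (N : Set C) {X Y : C} (f : X ⟶ Y) : Prop :=
  ∃ (Z : C) (_ : Z ∈ N) (u : X ⟶ Z) (v : Z ⟶ Y), f = u ≫ v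

/-- The morphism `X⟦-1⟧ ⟶ A` obtained from `h : X ⟶ A⟦1⟧` by shifting by `-1` and
composing with the canonical isomorphism `A⟦1⟧⟦-1⟧ ≅ A`. -/
noncomputable def descShift {X A : C} (h : X ⟶ A⟦(1:ℤ)⟧) : X⟦(-1:ℤ)⟧ ⟶ A :=
  h⟦(-1:ℤ)⟧' ≫ (shiftEquiv C (1:ℤ)).unitIso.inv.app A

/-- The class `S_N` of morphisms fitting in a distinguished triangle whose two other
maps factor through `N`. -/
def SN (N : Set C) {B C₀ : C} (g : B ⟶ C₀) : Prop :=
  ∃ (A : C) (f : A ⟶ B) (h : C₀ ⟶ A⟦(1:ℤ)⟧),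
    (Triangle.mk f g h ∈ distTriang C) ∧ FactorsThru N f ∧ FactorsThru N h

/-- The class `L`. -/
def ClassL (N : Set C) {A B : C} (f : A ⟶ B) : Prop :=
  ∃ (N₀ : C) (_ : N₀ ∈ N) (g : B ⟶ N₀) (h : N₀ ⟶ A⟦(1:ℤ)⟧),
    (Triangle.mk f g h ∈ distTriang C) ∧ FactorsThru N (descShift h)

/-- The class `R`. -/
def ClassR (N : Set C) {B C₀ : C} (g : B ⟶ C₀) : Prop :=
  ∃ (N₀ : C) (_ : N₀ ∈ N) (f : N₀ ⟶ B) (h : C₀ ⟶ N₀⟦(1:ℤ)⟧),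
    (Triangle.mk f g h ∈ distTriang C) ∧ FactorsThru N h

/-- Condition (Lex) on a morphism `h : C₀ ⟶ A⟦1⟧`. -/
def LexCond (N : Set C) {C₀ A : C} (h : C₀ ⟶ A⟦(1:ℤ)⟧) : Prop :=
  ∀ (N₀ : C), N₀ ∈ N → ∀ (x : N₀ ⟶ C₀), FactorsThru N (descShift (x ≫ h))

/-- Condition (Rex) on a morphism `h : C₀ ⟶ A⟦1⟧`. -/
def RexCond (N : Set C) {C₀ A : C} (h : C₀ ⟶ A⟦(1:ℤ)⟧) : Prop :=
  ∀ (N₀ : C), N₀ ∈ N → ∀ (y : A ⟶ N₀),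
    ∃ (M : C) (_ : M ∈ N) (u : C₀⟦(-1:ℤ)⟧ ⟶ M⟦(-1:ℤ)⟧) (v : M⟦(-1:ℤ)⟧ ⟶ N₀),
      descShift h ≫ y = u ≫ v

/-- `S_N` as a morphism property. -/
def SNProp (N : Set C) : MorphismProperty C := fun _ _ g => SN N g

/-!
Write `[N]` for the ideal of morphisms factoring through `N`; it is closed under sums because `N`
is closed under extensions, hence under `⊞`. Pre- or postcomposing with a morphism of `S_N`
reflects membership in `[N]`, and `S_N` satisfies the left Ore condition modulo `[N]`. Hence the
image in `C/[N]` of the composites of morphisms of `S_N` admits a left calculus of fractions, and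
the functor `C/[N] ⥤ D` induced by `Q` is a localization for it. Consequently `Q.map f = 0` iff
`f ∈ [N]`, and every morphism out of `Q.obj X` becomes some `Q.map x` after composing with an
isomorphism.

Since `g ≫ h = 0`, an epimorphism `Q.map g` forces `Q.map h = 0`, that is `h ∈ [N]`. Conversely,
if `h ∈ [N]` and `Q.map g ≫ ξ = 0`, write `ξ ≫ j = Q.map x` with `j` invertible: then
`g ≫ x ∈ [N]`, cancelling `g` (possible as `h ∈ [N]`) gives `x ∈ [N]`, and so `ξ = 0`.
-/

theorem CategoryTheory.Quotient.isLocalization_lift {C₁ D₁ : Type*} [Category C₁] [Category D₁]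
    {r : HomRel C₁} {W : MorphismProperty C₁} {W' : MorphismProperty (Quotient r)}
    (L : C₁ ⥤ D₁) [L.IsLocalization W]
    (H : ∀ (x y : C₁) (f₁ f₂ : x ⟶ y), r f₁ f₂ → L.map f₁ = L.map f₂)
    (hW : W ≤ W'.inverseImage (Quotient.functor r))
    (hW' : W'.IsInvertedBy (Quotient.lift r L H)) :
    (Quotient.lift r L H).IsLocalization W' := by
  let Φ : W'.Localization ⥤ D₁ := Localization.Construction.lift _ hW'
  have hΦ : W'.Q ⋙ Φ = Quotient.lift r L H := Localization.Construction.fac _ _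
  let Ψ : D₁ ⥤ W'.Localization := Localization.lift (Quotient.functor r ⋙ W'.Q)
    (fun _ _ w hw => Localization.inverts W'.Q W' _ (hW _ hw)) L
  let e : L ⋙ Ψ ≅ Quotient.functor r ⋙ W'.Q := Localization.fac _ _ L
  have : Localization.Lifting L W L (Ψ ⋙ Φ) :=
    ⟨(Functor.associator _ _ _).symm ≪≫ Functor.isoWhiskerRight e Φ ≪≫
      eqToIso (by rw [Functor.assoc, hΦ, Quotient.lift_spec])⟩
  have : Localization.Lifting W'.Q W' W'.Q (Φ ⋙ Ψ) :=
    ⟨eqToIso (by rw [← Functor.assoc, hΦ]) ≪≫ Quotient.natIsoLift r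
      (eqToIso (by rw [← Functor.assoc, Quotient.lift_spec]) ≪≫ e)⟩
  exact Functor.IsLocalization.of_equivalence_target W'.Q W' _
    (Equivalence.mk Φ Ψ (Localization.liftNatIso W'.Q W' W'.Q W'.Q _ _ (Iso.refl _)).symm
      (Localization.liftNatIso L W L L _ _ (Iso.refl _))) (eqToIso hΦ)

lemma CategoryTheory.MorphismProperty.IsInvertedBy.multiplicativeClosure {C₁ D₁ : Type*}
    [Category C₁] [Category D₁] {W : MorphismProperty C₁} {F : C₁ ⥤ D₁} (h : W.IsInvertedBy F) :
    W.multiplicativeClosure.IsInvertedBy F := by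
  rw [IsInvertedBy.iff_le_inverseImage_isomorphisms] at h ⊢
  exact (multiplicativeClosure_le_iff _ _).2 h

open ZeroObject

section

variable {C : Type*} [Category C] {N : Set C}

lemma factorsThru_iff {X Y : C} {f : X ⟶ Y} :
    FactorsThru N f ↔ ∃ (Z : C) (_ : Z ∈ N) (u : X ⟶ Z) (v : Z ⟶ Y), f = u ≫ v :=
  Iff.rfl

lemma FactorsThru.of_mem_source {X Y : C} (hX : X ∈ N) (f : X ⟶ Y) : FactorsThru N f :=
  ⟨X, hX, 𝟙 X, f, by simp⟩

lemma FactorsThru.of_mem_target {X Y : C} (hY : Y ∈ N) (f : X ⟶ Y) : FactorsThru N f :=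
  ⟨Y, hY, f, 𝟙 Y, by simp⟩

lemma FactorsThru.precomp {W X Y : C} (g : W ⟶ X) {f : X ⟶ Y} (hf : FactorsThru N f) :
    FactorsThru N (g ≫ f) := by
  obtain ⟨Z, hZ, u, v, rfl⟩ := hf
  exact ⟨Z, hZ, g ≫ u, v, by simp⟩

lemma FactorsThru.postcomp {X Y W : C} (g : Y ⟶ W) {f : X ⟶ Y} (hf : FactorsThru N f) :
    FactorsThru N (f ≫ g) := by
  obtain ⟨Z, hZ, u, v, rfl⟩ := hf
  exact ⟨Z, hZ, u, v ≫ g, by simp⟩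

lemma FactorsThru.neg [Preadditive C] {X Y : C} {f : X ⟶ Y} (hf : FactorsThru N f) :
    FactorsThru N (-f) := by
  obtain ⟨Z, hZ, u, v, rfl⟩ := hf
  exact ⟨Z, hZ, u, -v, by simp⟩

end

structure IsExtensionClosed (N : Set C) : Prop where
  zero_mem : ∀ X : C, IsZero X → X ∈ N
  ext_mem : ∀ T ∈ distTriang C, T.obj₁ ∈ N → T.obj₃ ∈ N → T.obj₂ ∈ N

namespace IsExtensionClosed

variable {N : Set C}

lemma mem_of_iso (hN : IsExtensionClosed N) {X Y : C} (e : X ≅ Y) (hX : X ∈ N) : Y ∈ N := by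
  obtain ⟨Z, g, h, hT⟩ := distinguished_cocone_triangle e.hom
  have hZ : IsZero Z := Triangle.isZero₃_of_isIso₁ _ hT (inferInstanceAs (IsIso e.hom))
  exact hN.ext_mem _ hT hX (hN.zero_mem Z hZ)

lemma shift_neg_one_shift_one_mem (hN : IsExtensionClosed N) {X : C} (hX : X ∈ N) :
    X⟦(-1:ℤ)⟧⟦(1:ℤ)⟧ ∈ N :=
  hN.mem_of_iso ((shiftEquiv C (1:ℤ)).counitIso.app X).symm hX

lemma factorsThru_zero (hN : IsExtensionClosed N) (X Y : C) : FactorsThru N (0 : X ⟶ Y) :=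
  ⟨0, hN.zero_mem _ (isZero_zero C), 0, 0, by simp⟩

lemma factorsThru_add (hN : IsExtensionClosed N) {X Y : C} {f g : X ⟶ Y}
    (hf : FactorsThru N f) (hg : FactorsThru N g) : FactorsThru N (f + g) := by
  obtain ⟨M₁, hM₁, u₁, v₁, rfl⟩ := hf
  obtain ⟨M₂, hM₂, u₂, v₂, rfl⟩ := hg
  exact ⟨M₁ ⊞ M₂, hN.ext_mem _ (binaryBiproductTriangle_distinguished M₁ M₂) hM₁ hM₂,
    biprod.lift u₁ u₂, biprod.desc v₁ v₂, by simp⟩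

lemma factorsThru_of_mor₁_comp (hN : IsExtensionClosed N) {T : Triangle C}
    (hT : T ∈ distTriang C) (h₃ : T.obj₃ ∈ N) {X : C} {x : T.obj₂ ⟶ X}
    (hx : FactorsThru N (T.mor₁ ≫ x)) : FactorsThru N x := by
  obtain ⟨M, hM, a, b, hab⟩ := factorsThru_iff.1 hx
  have hT' := inv_rot_of_distTriang _ hT
  set z : T.obj₃⟦(-1:ℤ)⟧ ⟶ T.obj₁ := T.invRotate.mor₁
  have hz : z ≫ T.mor₁ = 0 := comp_distTriang_mor_zero₁₂ _ hT'
  obtain ⟨E, i, p, hTE⟩ := distinguished_cocone_triangle (z ≫ a)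
  have hE : E ∈ N := hN.ext_mem _ (rot_of_distTriang _ hTE) hM (hN.shift_neg_one_shift_one_mem h₃)
  have hai : (z ≫ a) ≫ i = 0 := comp_distTriang_mor_zero₁₂ _ hTE
  obtain ⟨b', rfl⟩ : ∃ b', b = i ≫ b' := Triangle.yoneda_exact₂ _ hTE b (by
    show (z ≫ a) ≫ b = 0
    rw [Category.assoc, ← hab, reassoc_of% hz, zero_comp])
  obtain ⟨q, hq⟩ : ∃ q, a ≫ i = T.mor₁ ≫ q := Triangle.yoneda_exact₂ _ hT' _ (by
    show z ≫ a ≫ i = 0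
    rwa [Category.assoc] at hai)
  obtain ⟨d, hd⟩ : ∃ d, x - q ≫ b' = T.mor₂ ≫ d := Triangle.yoneda_exact₂ _ hT _ (by
    rw [Preadditive.comp_sub, hab, ← Category.assoc, hq, Category.assoc, sub_self])
  rw [← sub_add_cancel x (q ≫ b'), hd]
  exact hN.factorsThru_add ((FactorsThru.of_mem_source h₃ d).precomp _)
    ((FactorsThru.of_mem_target hE q).postcomp _)

lemma factorsThru_of_comp_mor₂_of_obj₁_mem (hN : IsExtensionClosed N) {T : Triangle C}
    (hT : T ∈ distTriang C) (h₁ : T.obj₁ ∈ N) {X : C} {x : X ⟶ T.obj₂}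
    (hx : FactorsThru N (x ≫ T.mor₂)) : FactorsThru N x := by
  obtain ⟨M, hM, a, b, hab⟩ := factorsThru_iff.1 hx
  obtain ⟨F, i, p, hTF⟩ := distinguished_cocone_triangle₂ (b ≫ T.mor₃)
  have hF : F ∈ N := hN.ext_mem _ hTF h₁ hM
  obtain ⟨a', rfl⟩ : ∃ a', a = a' ≫ p := Triangle.coyoneda_exact₃ _ hTF a (by
    show a ≫ b ≫ T.mor₃ = 0
    rw [← Category.assoc, ← hab, Category.assoc, comp_distTriang_mor_zero₂₃ _ hT, comp_zero])
  obtain ⟨q, -, hq⟩ : ∃ q : F ⟶ T.obj₂, i ≫ q = 𝟙 _ ≫ T.mor₁ ∧ p ≫ b = q ≫ T.mor₂ :=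
    complete_distinguished_triangle_morphism₂ _ _ hTF hT (𝟙 T.obj₁) b (by
      show (b ≫ T.mor₃) ≫ (𝟙 T.obj₁)⟦(1:ℤ)⟧' = b ≫ T.mor₃
      simp)
  obtain ⟨w, hw⟩ : ∃ w, x - a' ≫ q = w ≫ T.mor₁ := Triangle.coyoneda_exact₂ _ hT _ (by
    rw [Preadditive.sub_comp, hab, Category.assoc, Category.assoc, hq, sub_self])
  rw [← sub_add_cancel x (a' ≫ q), hw]
  exact hN.factorsThru_add ((FactorsThru.of_mem_source h₁ _).precomp w)
    ((FactorsThru.of_mem_target hF a').postcomp q)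

lemma factorsThru_of_mor₂_comp (hN : IsExtensionClosed N) {T : Triangle C}
    (hT : T ∈ distTriang C) (h₃ : FactorsThru N T.mor₃) {X : C} {x : T.obj₃ ⟶ X}
    (hx : FactorsThru N (T.mor₂ ≫ x)) : FactorsThru N x := by
  obtain ⟨Z, hZ, u, v, huv⟩ := factorsThru_iff.1 h₃
  obtain ⟨K, k, l, hK⟩ := distinguished_cocone_triangle₁ u
  have hku : k ≫ u = 0 := comp_distTriang_mor_zero₁₂ _ hK
  obtain ⟨m, rfl⟩ := Triangle.coyoneda_exact₃ _ hT k (by rw [huv, reassoc_of% hku, zero_comp])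
  have hmx := hx.precomp m
  rw [← Category.assoc] at hmx
  exact hN.factorsThru_of_mor₁_comp hK hZ hmx

lemma factorsThru_of_comp_mor₂ (hN : IsExtensionClosed N) {T : Triangle C}
    (hT : T ∈ distTriang C) (h₁ : FactorsThru N T.mor₁) {X : C} {x : X ⟶ T.obj₂}
    (hx : FactorsThru N (x ≫ T.mor₂)) : FactorsThru N x := by
  obtain ⟨Z, hZ, f₁, f₂, hf⟩ := factorsThru_iff.1 h₁
  obtain ⟨K, c, r, hK⟩ := distinguished_cocone_triangle f₂
  have hfc : f₂ ≫ c = 0 := comp_distTriang_mor_zero₁₂ _ hK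
  obtain ⟨n, rfl⟩ := Triangle.yoneda_exact₂ _ hT c (by rw [hf, Category.assoc, hfc, comp_zero])
  have hxn := hx.postcomp n
  rw [Category.assoc] at hxn
  exact hN.factorsThru_of_comp_mor₂_of_obj₁_mem hK hZ hxn

lemma factorsThru_cancel_left (hN : IsExtensionClosed N) {B C₀ : C} {s : B ⟶ C₀}
    (hs : (SNProp N).multiplicativeClosure s) {X : C} {x : C₀ ⟶ X}
    (hx : FactorsThru N (s ≫ x)) : FactorsThru N x := by
  induction hs with
  | of s hs =>
    obtain ⟨A, f, h, hT, -, hh⟩ := hs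
    exact hN.factorsThru_of_mor₂_comp hT hh hx
  | id => simpa using hx
  | comp_of f g _ hg ih =>
    obtain ⟨A, f', h, hT, -, hh⟩ := hg
    rw [Category.assoc] at hx
    exact hN.factorsThru_of_mor₂_comp hT hh (ih hx)

lemma factorsThru_cancel_right (hN : IsExtensionClosed N) {B C₀ : C} {s : B ⟶ C₀}
    (hs : (SNProp N).multiplicativeClosure s) {X : C} {x : X ⟶ B}
    (hx : FactorsThru N (x ≫ s)) : FactorsThru N x := by
  induction hs with
  | of s hs =>
    obtain ⟨A, f, h, hT, hf, -⟩ := hs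
    exact hN.factorsThru_of_comp_mor₂ hT hf hx
  | id => simpa using hx
  | comp_of f g _ hg ih =>
    obtain ⟨A, f', h, hT, hf, -⟩ := hg
    rw [← Category.assoc] at hx
    exact ih (hN.factorsThru_of_comp_mor₂ hT hf hx)

lemma exists_factorsThru_comp_sub_comp (hN : IsExtensionClosed N) {B C₀ Y : C} {s : B ⟶ C₀}
    (hs : SNProp N s) (f : B ⟶ Y) :
    ∃ (Y' : C) (s' : Y ⟶ Y') (f' : C₀ ⟶ Y'), SNProp N s' ∧ FactorsThru N (f ≫ s' - s ≫ f') := by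
  obtain ⟨A, fs, hm, hT, hfs, hhm⟩ := hs
  obtain ⟨Z₁, hZ₁, f₁, f₂, rfl⟩ := factorsThru_iff.1 hfs
  obtain ⟨Z, hZ, u, v, rfl⟩ := factorsThru_iff.1 hhm
  -- `f ≫ s'` and `s ≫ f'` will differ by a morphism through `E`, an extension of `Z` by `Z₁`.
  obtain ⟨E, i, p, hTE⟩ := distinguished_cocone_triangle₂ (v ≫ f₁⟦(1:ℤ)⟧')
  have hE : E ∈ N := hN.ext_mem _ hTE hZ₁ hZ
  obtain ⟨t, ht, -⟩ : ∃ t : B ⟶ E, (f₁ ≫ f₂) ≫ t = f₁ ≫ i ∧ s ≫ u = t ≫ p :=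
    complete_distinguished_triangle_morphism₂ _ _ hT hTE f₁ u (Category.assoc _ _ _)
  have hTE' := inv_rot_of_distTriang _ hTE
  set w : Z⟦(-1:ℤ)⟧ ⟶ Z₁ := (Triangle.mk i p (v ≫ f₁⟦(1:ℤ)⟧')).invRotate.mor₁
  obtain ⟨Y', s', ρ, hTs'⟩ := distinguished_cocone_triangle (w ≫ f₂ ≫ f)
  have hs' : SNProp N s' := ⟨_, _, ρ, hTs', ⟨Z₁, hZ₁, w, f₂ ≫ f, rfl⟩,
    FactorsThru.of_mem_target (hN.shift_neg_one_shift_one_mem hZ) ρ⟩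
  obtain ⟨e, he⟩ : ∃ e : E ⟶ Y', f₂ ≫ f ≫ s' = i ≫ e := Triangle.yoneda_exact₂ _ hTE' _ (by
    have hμ : (w ≫ f₂ ≫ f) ≫ s' = 0 := comp_distTriang_mor_zero₁₂ _ hTs'
    show w ≫ f₂ ≫ f ≫ s' = 0
    simpa only [Category.assoc] using hμ)
  obtain ⟨f', hf'⟩ : ∃ f', f ≫ s' - t ≫ e = s ≫ f' := Triangle.yoneda_exact₂ _ hT _ (by
    show (f₁ ≫ f₂) ≫ (f ≫ s' - t ≫ e) = 0
    simp only [Preadditive.comp_sub, Category.assoc]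
    rw [reassoc_of% ht, he, sub_self])
  refine ⟨Y', s', f', hs', ?_⟩
  rw [← hf', sub_sub_cancel]
  exact (FactorsThru.of_mem_target hE t).postcomp e

lemma exists_factorsThru_comp_sub_comp_of_multiplicativeClosure (hN : IsExtensionClosed N)
    {B C₀ Y : C} {s : B ⟶ C₀} (hs : (SNProp N).multiplicativeClosure s) (f : B ⟶ Y) :
    ∃ (Y' : C) (s' : Y ⟶ Y') (f' : C₀ ⟶ Y'),
      (SNProp N).multiplicativeClosure s' ∧ FactorsThru N (f ≫ s' - s ≫ f') := by
  induction hs generalizing Y with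
  | of s hs =>
    obtain ⟨Y', s', f', hs', hf'⟩ := hN.exists_factorsThru_comp_sub_comp hs f
    exact ⟨Y', s', f', .of _ hs', hf'⟩
  | id => exact ⟨Y, 𝟙 Y, f, .id _, by simpa using hN.factorsThru_zero _ _⟩
  | comp_of g₁ g₂ _ hg₂ ih =>
    obtain ⟨Y₁, s₁, f₁, hs₁, hf₁⟩ := ih f
    obtain ⟨Y₂, s₂, f₂, hs₂, hf₂⟩ := hN.exists_factorsThru_comp_sub_comp hg₂ f₁
    refine ⟨Y₂, s₁ ≫ s₂, f₂, .comp_of _ _ hs₁ hs₂, ?_⟩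
    convert hN.factorsThru_add (hf₁.postcomp s₂) (hf₂.precomp g₁) using 1
    simp only [Preadditive.sub_comp, Preadditive.comp_sub, Category.assoc]
    abel

end IsExtensionClosed

def factorsThruRel {C : Type*} [Category C] [Preadditive C] (N : Set C) : HomRel C :=
  fun _ _ f g => FactorsThru N (f - g)

def quotientSN (N : Set C) : MorphismProperty (Quotient (factorsThruRel N)) :=
  (SNProp N).multiplicativeClosure.strictMap (Quotient.functor _)

instance (N : Set C) : (quotientSN N).IsMultiplicative where
  id_mem X := by
    have := MorphismProperty.map_mem_strictMap _ (Quotient.functor (factorsThruRel N)) _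
      ((SNProp N).multiplicativeClosure.id_mem X.as)
    rwa [CategoryTheory.Functor.map_id] at this
  comp_mem := by
    rintro _ _ _ _ _ ⟨hf⟩ ⟨hg⟩
    have := MorphismProperty.map_mem_strictMap _ (Quotient.functor (factorsThruRel N)) _
      ((SNProp N).multiplicativeClosure.comp_mem _ _ hf hg)
    rwa [CategoryTheory.Functor.map_comp] at this

namespace IsExtensionClosed

variable {N : Set C}

lemma congruence (hN : IsExtensionClosed N) : Congruence (factorsThruRel N) where
  equivalence :=
    { refl f := by simpa [factorsThruRel] using hN.factorsThru_zero _ _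
      symm {f g} h := by simpa [factorsThruRel] using h.neg
      trans {f g h} h₁ h₂ := by simpa [factorsThruRel] using hN.factorsThru_add h₁ h₂ }
  comp_left f g g' h := by simpa [factorsThruRel, Preadditive.comp_sub] using h.precomp f
  comp_right g h := by simpa [factorsThruRel, Preadditive.sub_comp] using h.postcomp g

lemma quotient_map_eq_iff (hN : IsExtensionClosed N) {X Y : C} (f g : X ⟶ Y) :
    (Quotient.functor (factorsThruRel N)).map f = (Quotient.functor _).map g ↔
      FactorsThru N (f - g) :=
  have := hN.congruence
  Quotient.functor_map_eq_iff _ f g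

lemma hasLeftCalculusOfFractions (hN : IsExtensionClosed N) :
    (quotientSN N).HasLeftCalculusOfFractions where
  exists_leftFraction := by
    rintro X Y ⟨_, ⟨hs⟩, f⟩
    obtain ⟨f, rfl⟩ := (Quotient.functor _).map_surjective f
    obtain ⟨Y', s', f', hs', hf'⟩ :=
      hN.exists_factorsThru_comp_sub_comp_of_multiplicativeClosure hs f
    refine ⟨⟨(Quotient.functor _).map f', (Quotient.functor _).map s', ⟨hs'⟩⟩, ?_⟩
    simpa only [← Functor.map_comp, hN.quotient_map_eq_iff] using hf'
  ext := by
    rintro X' X Y f₁ f₂ _ ⟨hs⟩ h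
    obtain ⟨f₁, rfl⟩ := (Quotient.functor _).map_surjective f₁
    obtain ⟨f₂, rfl⟩ := (Quotient.functor _).map_surjective f₂
    refine ⟨_, 𝟙 _, MorphismProperty.id_mem _ _, ?_⟩
    rw [← Functor.map_comp, ← Functor.map_comp, hN.quotient_map_eq_iff,
      ← Preadditive.comp_sub] at h
    rw [Category.comp_id, Category.comp_id, hN.quotient_map_eq_iff]
    exact hN.factorsThru_cancel_left hs h

section Localization

variable {D : Type*} [Category D] [Preadditive D] (Q : C ⥤ D) [Q.Additive]
  [Q.IsLocalization (SNProp N)]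

lemma map_eq_zero_of_factorsThru (hN : IsExtensionClosed N) {X Y : C} {f : X ⟶ Y}
    (hf : FactorsThru N f) : Q.map f = 0 := by
  obtain ⟨M, hM, u, v, rfl⟩ := factorsThru_iff.1 hf
  have : IsIso (Q.map (0 : M ⟶ 0)) := Localization.inverts Q (SNProp N) _
    ⟨M, 𝟙 M, 0, contractible_distinguished M, .of_mem_source hM _, hN.factorsThru_zero _ _⟩
  have hQM : IsZero (Q.obj M) :=
    (Q.map_isZero (isZero_zero C)).of_iso (asIso (Q.map (0 : M ⟶ 0)))
  rw [Q.map_comp, hQM.eq_of_src (Q.map v) 0, comp_zero]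

def quotientLift (hN : IsExtensionClosed N) : Quotient (factorsThruRel N) ⥤ D :=
  CategoryTheory.Quotient.lift _ Q fun _ _ f g h => sub_eq_zero.1 <| by
    rw [← Q.map_sub]
    exact hN.map_eq_zero_of_factorsThru Q h

lemma isLocalization_quotientLift (hN : IsExtensionClosed N) :
    (hN.quotientLift Q).IsLocalization (quotientSN N) := by
  refine Quotient.isLocalization_lift Q _ (fun _ _ s hs => ⟨.of _ hs⟩) ?_
  rintro _ _ _ ⟨ht⟩
  exact (Localization.inverts Q _).multiplicativeClosure _ ht

theorem map_eq_zero_iff (hN : IsExtensionClosed N) {X Y : C} (f : X ⟶ Y) :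
    Q.map f = 0 ↔ FactorsThru N f := by
  refine ⟨fun hf => ?_, hN.map_eq_zero_of_factorsThru Q⟩
  have := hN.hasLeftCalculusOfFractions
  have := hN.isLocalization_quotientLift Q
  obtain ⟨_, _, ⟨ht⟩, h⟩ := (MorphismProperty.map_eq_iff_postcomp (hN.quotientLift Q)
    (quotientSN N) ((Quotient.functor _).map f) ((Quotient.functor _).map 0)).1
      (hf.trans (Q.map_zero _ _).symm)
  rw [← Functor.map_comp, ← Functor.map_comp, hN.quotient_map_eq_iff, zero_comp,
    sub_zero] at h
  exact hN.factorsThru_cancel_right ht h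

theorem exists_comp_map_eq_map (hN : IsExtensionClosed N) {X Y : C} (ξ : Q.obj X ⟶ Q.obj Y) :
    ∃ (Y' : C) (f : X ⟶ Y') (t : Y ⟶ Y'),
      (SNProp N).multiplicativeClosure t ∧ ξ ≫ Q.map t = Q.map f := by
  have := hN.hasLeftCalculusOfFractions
  have := hN.isLocalization_quotientLift Q
  obtain ⟨⟨f, s, ⟨ht⟩⟩, hφ⟩ := Localization.exists_leftFraction (hN.quotientLift Q)
    (quotientSN N) (X := (Quotient.functor _).obj X) (Y := (Quotient.functor _).obj Y) ξ
  obtain ⟨f, rfl⟩ := (Quotient.functor _).map_surjective f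
  subst hφ
  exact ⟨_, f, _, ht, MorphismProperty.LeftFraction.map_comp_map_s _ _ _⟩

theorem exists_isIso_comp_eq_map (hN : IsExtensionClosed N) {X : C} {R : D}
    (ξ : Q.obj X ⟶ R) : ∃ (Y : C) (f : X ⟶ Y) (j : R ⟶ Q.obj Y), IsIso j ∧ ξ ≫ j = Q.map f := by
  have := Localization.essSurj Q (SNProp N)
  let e := Q.objObjPreimageIso R
  obtain ⟨Y, f, t, ht, h⟩ := hN.exists_comp_map_eq_map Q (ξ ≫ e.inv)
  have : IsIso (Q.map t) := (Localization.inverts Q _).multiplicativeClosure _ ht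
  exact ⟨Y, f, e.inv ≫ Q.map t, inferInstance, by rwa [← Category.assoc]⟩

end Localization

end IsExtensionClosed

theorem stmt11_general (N : Set C)
    (hN0 : ∀ X : C, Limits.IsZero X → X ∈ N)
    (hNext : ∀ (T : Triangle C), (T ∈ distTriang C) → T.obj₁ ∈ N → T.obj₃ ∈ N → T.obj₂ ∈ N)
    {D : Type u₂} [Category.{v₂} D] [Preadditive D]
    (Q : C ⥤ D) [Q.Additive] [Q.IsLocalization (SNProp N)]
    {A B C₀ : C} (f : A ⟶ B) (g : B ⟶ C₀) (h : C₀ ⟶ A⟦(1:ℤ)⟧)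
    (hT : Triangle.mk f g h ∈ distTriang C) :
    Epi (Q.map g) ↔ FactorsThru N h := by
  have hN : IsExtensionClosed N := ⟨hN0, hNext⟩
  constructor
  · intro _
    have hgh : g ≫ h = 0 := comp_distTriang_mor_zero₂₃ _ hT
    rw [← hN.map_eq_zero_iff Q, ← cancel_epi (Q.map g), ← Q.map_comp, hgh, Q.map_zero, comp_zero]
  · refine fun hh => Preadditive.epi_of_cancel_zero _ fun ξ hξ => ?_
    obtain ⟨Y, x, j, _, hξj⟩ := hN.exists_isIso_comp_eq_map Q ξ
    have hgx : FactorsThru N (g ≫ x) := by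
      rw [← hN.map_eq_zero_iff Q, Q.map_comp, ← hξj, reassoc_of% hξ, zero_comp]
    have hx : Q.map x = 0 := (hN.map_eq_zero_iff Q x).2 (hN.factorsThru_of_mor₂_comp hT hh hgx)
    rw [← cancel_mono j, hξj, hx, zero_comp]

theorem stmt11 (N : Set C)
    (hN0 : ∀ X : C, Limits.IsZero X → X ∈ N)
    (hNiso : ∀ ⦃X Y : C⦄, (X ≅ Y) → X ∈ N → Y ∈ N)
    (hNsum : ∀ ⦃X Z : C⦄ (i : X ⟶ Z) (r : Z ⟶ X), i ≫ r = 𝟙 X → Z ∈ N → X ∈ N)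
    (hNext : ∀ (T : Triangle C), (T ∈ distTriang C) → T.obj₁ ∈ N → T.obj₃ ∈ N → T.obj₂ ∈ N)
    {D : Type u₂} [Category.{v₂} D] [Preadditive D] [HasZeroObject D]
    (Q : C ⥤ D) [Q.Additive] [Q.IsLocalization (SNProp N)]
    {A B C₀ : C} (f : A ⟶ B) (g : B ⟶ C₀) (h : C₀ ⟶ A⟦(1:ℤ)⟧)
    (hT : Triangle.mk f g h ∈ distTriang C) :
    Epi (Q.map g) ↔ FactorsThru N h :=
  stmt11_general N hN0 hNext Q f g h hT
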